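/- arXiv:1301.2734 — 5 statements merged into one kernel-verified Lean document; each statement's English description precedes it below -/
import Mathlib

section
/- Let S be a feasible scenario of the multi-band uncertainty set and suppose for some row i the band partition cardinalities |J_{ik}(S)| do not all equal θ_k. Then there exists a feasible scenario S' with d^{S'}_{ij} ≥ d^S_{ij} for all i,j, such that for the modified row the band partition cardinalities are closer to the profile; iterating, there exists a feasible scenario S'' dominating S with |J_{ik}(S'')| = θ_k for all i ∈ I, k ∈ K. -/
open scoped Classical

/-- `v` falls in band `k`: band `K⁻` is the single point `d K⁻`,
band `k > K⁻` is the interval `(d (k-1), d k]`. -/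
def inBand (d : ℤ → ℝ) (Km k : ℤ) (v : ℝ) : Prop :=
  if k = Km then v = d Km else d (k-1) < v ∧ v ≤ d k

/-!
Each row is treated separately. If `b` are the current bands of the row, feasibility gives the
cumulative inequality `∑_{x ≤ k} θ x ≤ #{j | b j ≤ k}`: below `p` because `θ = l` there, from `p`
on because `θ = u` on the complementary tail. Sort the row by band and hand out new bands along
the sorted order, the first `θ K⁻` entries getting `K⁻`, the next `θ (K⁻+1)` getting `K⁻+1`, and
so on; the cumulative inequality says that no entry moves to a lower band. The new value of an
entry sent to band `k` is the breakpoint `d i j k`.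
-/

open Finset

section Bands

variable {f : ℤ → ℝ} {Km Kp : ℤ}

lemma inBand.le {k : ℤ} {v : ℝ} (h : inBand f Km k v) : v ≤ f k := by
  unfold inBand at h
  split_ifs at h with hk
  · exact (h.trans (congrArg f hk.symm)).le
  · exact h.2

lemma inBand_self (hf : StrictMonoOn f (Set.Icc Km Kp)) {k : ℤ} (hk : k ∈ Icc Km Kp) :
    inBand f Km k (f k) := by
  rw [mem_Icc] at hk
  unfold inBand
  split_ifs with hKm
  · rw [hKm]
  · exact ⟨hf ⟨by omega, by omega⟩ hk (by omega), le_rfl⟩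

lemma exists_inBand (hK : Km ≤ Kp) {v : ℝ} (h₁ : f Km ≤ v) (h₂ : v ≤ f Kp) :
    ∃ k ∈ Icc Km Kp, inBand f Km k v := by
  set s : Finset ℤ := {k ∈ Icc Km Kp | v ≤ f k}
  have hne : s.Nonempty := ⟨Kp, by simp [s, hK, h₂]⟩
  obtain ⟨hk, hvk⟩ := mem_filter.1 (min'_mem s hne)
  refine ⟨_, hk, ?_⟩
  unfold inBand
  split_ifs with hKm
  · exact le_antisymm (hKm ▸ hvk) h₁
  · refine ⟨lt_of_not_ge fun hle => ?_, hvk⟩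
    rw [mem_Icc] at hk
    have := min'_le s _ (mem_filter.2 ⟨mem_Icc.2 ⟨by omega, by omega⟩, hle⟩)
    omega

lemma inBand_unique (hf : StrictMonoOn f (Set.Icc Km Kp)) {k k' : ℤ} (hk : k ∈ Icc Km Kp)
    (hk' : k' ∈ Icc Km Kp) {v : ℝ} (h : inBand f Km k v) (h' : inBand f Km k' v) : k = k' := by
  by_contra hne
  wlog hlt : k < k' generalizing k k'
  · exact this hk' hk h' h (Ne.symm hne) (lt_of_le_of_ne (not_lt.1 hlt) (Ne.symm hne))
  rw [mem_Icc] at hk hk'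
  have hk'Km : k' ≠ Km := by omega
  unfold inBand at h'
  rw [if_neg hk'Km] at h'
  have := hf.monotoneOn hk ⟨by omega, by omega⟩ (show k ≤ k' - 1 by omega)
  linarith [h.le, h'.1]

lemma filter_inBand_eq_filter_eq {ι : Type*} [Fintype ι] {f : ι → ℤ → ℝ}
    (hf : ∀ j, StrictMonoOn (f j) (Set.Icc Km Kp)) {v : ι → ℝ} {b : ι → ℤ}
    (hb : ∀ j, b j ∈ Icc Km Kp) (hv : ∀ j, inBand (f j) Km (b j) (v j)) {k : ℤ}
    (hk : k ∈ Icc Km Kp) :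
    univ.filter (fun j => inBand (f j) Km k (v j)) = univ.filter (fun j => b j = k) := by
  ext j
  simp only [mem_filter, mem_univ, true_and]
  exact ⟨fun h => inBand_unique (hf j) (hb j) hk (hv j) h, fun h => h ▸ hv j⟩

end Bands

section Profile

variable {Km Kp : ℤ}

lemma sum_Icc_sub_one_add {M : Type*} [AddCommMonoid M] (g : ℤ → M) {a b : ℤ} (h : a ≤ b) :
    ∑ x ∈ Icc a (b - 1), g x + g b = ∑ x ∈ Icc a b, g x := by
  rw [← insert_Icc_sub_one_right_eq_Icc h, sum_insert (by simp), add_comm]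

lemma sum_Icc_add_sum_Icc {M : Type*} [AddCommMonoid M] (g : ℤ → M) {a b c : ℤ}
    (hab : a ≤ b + 1) (hbc : b ≤ c) :
    ∑ x ∈ Icc a b, g x + ∑ x ∈ Icc (b + 1) c, g x = ∑ x ∈ Icc a c, g x := by
  rw [← sum_union (disjoint_left.2 fun x hx hx' => by simp only [mem_Icc] at hx hx'; omega)]
  congr 1
  ext x
  simp only [mem_union, mem_Icc]
  omega

lemma card_filter_le_eq_sum_Icc {ι : Type*} [Fintype ι] {b : ι → ℤ} (hb : ∀ j, Km ≤ b j)
    (k : ℤ) : #{j | b j ≤ k} = ∑ x ∈ Icc Km k, #{j | b j = x} := by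
  rw [card_eq_sum_card_fiberwise (f := b) (t := Icc Km k) fun j hj => by simp_all]
  refine sum_congr rfl fun x hx => congrArg card ?_
  ext j
  simp only [mem_filter, mem_univ, true_and, mem_Icc] at hx ⊢
  constructor
  · exact fun h => h.2
  · rintro rfl
    exact ⟨hx.2, rfl⟩

variable {p : ℤ} {l u θ : ℤ → ℤ}

lemma profile_nonneg {n : ℤ} (hp : p ∈ Icc Km Kp)
    (hbounds : ∀ k ∈ Icc Km Kp, 0 ≤ l k ∧ l k ≤ u k)
    (hpfeas : ∑ x ∈ Icc Km p, l x + ∑ x ∈ Icc (p + 1) Kp, u x ≤ n)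
    (hθlt : ∀ k, k < p → θ k = l k) (hθgt : ∀ k, p < k → θ k = u k)
    (hθsum : ∑ k ∈ Icc Km Kp, θ k = n) {k : ℤ} (hk : k ∈ Icc Km Kp) : 0 ≤ θ k := by
  rw [mem_Icc] at hk hp
  obtain hkp | rfl | hpk := lt_trichotomy k p
  · rw [hθlt k hkp]
    exact (hbounds k (mem_Icc.2 hk)).1
  · have hlow : ∑ x ∈ Icc Km (k - 1), θ x = ∑ x ∈ Icc Km (k - 1), l x :=
      sum_congr rfl fun x hx => hθlt x (by simp only [mem_Icc] at hx; omega)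
    have hhigh : ∑ x ∈ Icc (k + 1) Kp, θ x = ∑ x ∈ Icc (k + 1) Kp, u x :=
      sum_congr rfl fun x hx => hθgt x (by simp only [mem_Icc] at hx; omega)
    have := (hbounds k (mem_Icc.2 hk)).1
    rw [← sum_Icc_add_sum_Icc θ (by omega) hk.2, ← sum_Icc_sub_one_add θ hk.1] at hθsum
    rw [← sum_Icc_sub_one_add l hk.1] at hpfeas
    omega
  · rw [hθgt k hpk]
    exact (hbounds k (mem_Icc.2 hk)).1.trans (hbounds k (mem_Icc.2 hk)).2

lemma sum_Icc_profile_le {N : ℤ → ℤ} (hθlt : ∀ k, k < p → θ k = l k)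
    (hθgt : ∀ k, p < k → θ k = u k) (hl : ∀ k ∈ Icc Km Kp, l k ≤ N k)
    (hu : ∀ k ∈ Icc Km Kp, N k ≤ u k) (hsum : ∑ k ∈ Icc Km Kp, θ k = ∑ k ∈ Icc Km Kp, N k)
    {k : ℤ} (hk : k ∈ Icc Km Kp) : ∑ x ∈ Icc Km k, θ x ≤ ∑ x ∈ Icc Km k, N x := by
  rw [mem_Icc] at hk
  obtain hkp | hpk := lt_or_ge k p
  · refine sum_le_sum fun x hx => ?_
    rw [mem_Icc] at hx
    rw [hθlt x (by omega)]
    exact hl x (mem_Icc.2 ⟨hx.1, by omega⟩)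
  · have htail : ∑ x ∈ Icc (k + 1) Kp, N x ≤ ∑ x ∈ Icc (k + 1) Kp, θ x :=
      sum_le_sum fun x hx => by
        rw [mem_Icc] at hx
        rw [hθgt x (by omega)]
        exact hu x (mem_Icc.2 ⟨by omega, hx.2⟩)
    rw [← sum_Icc_add_sum_Icc θ (by omega) hk.2, ← sum_Icc_add_sum_Icc N (by omega) hk.2] at hsum
    omega

lemma sum_Icc_profile_le_card_filter_le {ι : Type*} [Fintype ι] {b : ι → ℤ}
    (hb : ∀ j, b j ∈ Icc Km Kp) (hθlt : ∀ k, k < p → θ k = l k) (hθgt : ∀ k, p < k → θ k = u k)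
    (hθsum : ∑ k ∈ Icc Km Kp, θ k = Fintype.card ι)
    (hfeas : ∀ k ∈ Icc Km Kp, l k ≤ #{j | b j = k} ∧ (#{j | b j = k} : ℤ) ≤ u k)
    {k : ℤ} (hk : k ∈ Icc Km Kp) : ∑ x ∈ Icc Km k, θ x ≤ #{j | b j ≤ k} := by
  have hbKm : ∀ j, Km ≤ b j := fun j => (mem_Icc.1 (hb j)).1
  have htotal : #{j | b j ≤ Kp} = Fintype.card ι := by
    rw [filter_true_of_mem fun j _ => (mem_Icc.1 (hb j)).2, card_univ]
  rw [card_filter_le_eq_sum_Icc hbKm] at htotal ⊢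
  push_cast
  refine sum_Icc_profile_le hθlt hθgt (fun x hx => (hfeas x hx).1) (fun x hx => (hfeas x hx).2)
    ?_ hk
  rw [hθsum, ← htotal]
  push_cast
  rfl

end Profile

section Assignment

variable {n : ℕ} {Km Kp : ℤ} {θ : ℤ → ℤ}

lemma Monotone.le_of_lt_card_filter_le {α : Type*} [LinearOrder α] {g : Fin n → α}
    (hg : Monotone g) {t : Fin n} {a : α} (h : (t : ℕ) < #{s | g s ≤ a}) : g t ≤ a := by
  by_contra! hlt
  have hsub : ({s | g s ≤ a} : Finset (Fin n)) ⊆ ({s | s < t} : Finset (Fin n)) := fun s hs => by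
    simp only [mem_filter, mem_univ, true_and] at hs ⊢
    by_contra! hts
    exact (hlt.trans_le (hg hts)).not_ge hs
  have := card_le_card hsub
  rw [filter_gt_eq_Iio, Fin.card_Iio] at this
  omega

lemma exists_lt_sum_Icc_and_card_fiber_eq (hθ : ∀ k ∈ Icc Km Kp, 0 ≤ θ k)
    (hsum : ∑ k ∈ Icc Km Kp, θ k = n) :
    ∃ c : Fin n → ℤ, (∀ t, c t ∈ Icc Km Kp) ∧
      (∀ t : Fin n, ((t : ℕ) : ℤ) < ∑ x ∈ Icc Km (c t), θ x) ∧
      ∀ k ∈ Icc Km Kp, (#{t | c t = k} : ℤ) = θ k := by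
  set T : ℤ → ℤ := fun k => ∑ x ∈ Icc Km k, θ x
  have hT_nonneg : ∀ k ≤ Kp, 0 ≤ T k := fun k hk =>
    sum_nonneg fun x hx => hθ x (by simp only [mem_Icc] at hx ⊢; omega)
  have hT_mono : ∀ k k', k ≤ k' → k' ≤ Kp → T k ≤ T k' := fun k k' h h' =>
    sum_le_sum_of_subset_of_nonneg (Icc_subset_Icc_right h)
      fun x hx _ => hθ x (by simp only [mem_Icc] at hx ⊢; omega)
  have hne : ∀ t : Fin n, ({k ∈ Icc Km Kp | (t : ℤ) < T k} : Finset ℤ).Nonempty := by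
    intro t
    have hK : Km ≤ Kp := by
      by_contra h
      rw [Icc_eq_empty h, sum_empty] at hsum
      have := t.isLt
      omega
    exact ⟨Kp, mem_filter.2 ⟨right_mem_Icc.2 hK, by simp only [T, hsum]; exact_mod_cast t.isLt⟩⟩
  set c : Fin n → ℤ := fun t => min' _ (hne t)
  have hc_mem : ∀ t, c t ∈ Icc Km Kp := fun t => (mem_filter.1 (min'_mem _ (hne t))).1
  have hc_lt : ∀ t : Fin n, ((t : ℕ) : ℤ) < T (c t) := fun t =>
    (mem_filter.1 (min'_mem _ (hne t))).2
  have hc_le_iff : ∀ t : Fin n, ∀ k ≤ Kp, c t ≤ k ↔ ((t : ℕ) : ℤ) < T k := by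
    intro t k hk
    refine ⟨fun h => (hc_lt t).trans_le (hT_mono _ _ h hk), fun h => ?_⟩
    by_cases hKm : Km ≤ k
    · exact min'_le _ _ (mem_filter.2 ⟨mem_Icc.2 ⟨hKm, hk⟩, h⟩)
    · simp only [T, Icc_eq_empty hKm, sum_empty] at h
      omega
  have hcard_le : ∀ k ≤ Kp, (#{t | c t ≤ k} : ℤ) = T k := by
    intro k hk
    have hTn : T k ≤ n := hsum ▸ hT_mono k Kp hk le_rfl
    rw [filter_congr fun t _ => (hc_le_iff t k hk).trans
      (show _ ↔ (t : ℕ) < (T k).toNat by omega), Fin.card_filter_val_lt]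
    have := hT_nonneg k hk
    omega
  refine ⟨c, hc_mem, hc_lt, fun k hk => ?_⟩
  rw [mem_Icc] at hk
  have hsplit : #{t | c t ≤ k} = #{t | c t ≤ k - 1} + #{t | c t = k} := by
    rw [← card_union_of_disjoint (disjoint_filter.2 fun t _ h h' => by omega)]
    congr 1
    ext t
    simp only [mem_union, mem_filter, mem_univ, true_and]
    omega
  have hstep : T (k - 1) + θ k = T k := sum_Icc_sub_one_add θ hk.1
  have hk' := hcard_le k hk.2
  have hk'' := hcard_le (k - 1) (by omega)
  rw [hsplit, Nat.cast_add] at hk'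
  omega

lemma card_filter_comp_equiv {α β : Type*} [Fintype α] [Fintype β] (e : α ≃ β) (P : β → Prop)
    [DecidablePred P] :
    #{a | P (e a)} = #{b | P b} :=
  card_equiv e fun a => by simp

lemma exists_le_and_card_fiber_eq (hθ : ∀ k ∈ Icc Km Kp, 0 ≤ θ k)
    (hsum : ∑ k ∈ Icc Km Kp, θ k = n) (b : Fin n → ℤ)
    (hdom : ∀ k ∈ Icc Km Kp, ∑ x ∈ Icc Km k, θ x ≤ #{j | b j ≤ k}) :
    ∃ c : Fin n → ℤ, (∀ j, b j ≤ c j) ∧ (∀ j, c j ∈ Icc Km Kp) ∧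
      ∀ k ∈ Icc Km Kp, (#{j | c j = k} : ℤ) = θ k := by
  obtain ⟨c, hc_mem, hc_lt, hc_card⟩ := exists_lt_sum_Icc_and_card_fiber_eq hθ hsum
  obtain ⟨σ, hσ⟩ : ∃ σ : Equiv.Perm (Fin n), Monotone (b ∘ σ) := ⟨_, Tuple.monotone_sort b⟩
  refine ⟨fun j => c (σ.symm j), fun j => ?_, fun j => hc_mem _, fun k hk => ?_⟩
  · have hlt : ((σ.symm j : ℕ) : ℤ) < #{t | b (σ t) ≤ c (σ.symm j)} := by
      rw [card_filter_comp_equiv σ fun j' => b j' ≤ c (σ.symm j)]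
      exact (hc_lt _).trans_le (hdom _ (hc_mem _))
    have := hσ.le_of_lt_card_filter_le (by exact_mod_cast hlt)
    rwa [Function.comp_apply, Equiv.apply_symm_apply] at this
  · beta_reduce
    rw [← hc_card k hk, card_filter_comp_equiv σ.symm fun t => c t = k]

end Assignment

theorem stmt2_general (m n : ℕ) (Km Kp : ℤ)
    (d : Fin m → Fin n → ℤ → ℝ)
    (hmono : ∀ i j, StrictMonoOn (d i j) (Set.Icc (Km:ℤ) Kp))
    (l u : ℤ → ℤ)
    (hbounds : ∀ k ∈ Finset.Icc Km Kp, 0 ≤ l k ∧ l k ≤ u k ∧ u k ≤ (n:ℤ))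
    (p : ℤ) (hp : p ∈ Finset.Icc Km Kp)
    (hpfeas : (∑ i ∈ Finset.Icc Km p, l i) + (∑ i ∈ Finset.Icc (p+1) Kp, u i) ≤ (n:ℤ))
    (θ : ℤ → ℤ)
    (hθlt : ∀ k, k < p → θ k = l k)
    (hθgt : ∀ k, p < k → θ k = u k)
    (hθp : θ p = n - ∑ k ∈ (Finset.Icc Km Kp).erase p, θ k)
    (S : Fin m → Fin n → ℝ)
    (hrange : ∀ i j, d i j Km ≤ S i j ∧ S i j ≤ d i j Kp)
    (hfeas : ∀ i : Fin m, ∀ k ∈ Finset.Icc Km Kp,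
      l k ≤ ((Finset.univ.filter (fun j => inBand (d i j) Km k (S i j))).card : ℤ) ∧
      ((Finset.univ.filter (fun j => inBand (d i j) Km k (S i j))).card : ℤ) ≤ u k) :
    ∃ S'' : Fin m → Fin n → ℝ,
      (∀ i j, S i j ≤ S'' i j) ∧
      (∀ i j, d i j Km ≤ S'' i j ∧ S'' i j ≤ d i j Kp) ∧
      (∀ i : Fin m, ∀ k ∈ Finset.Icc Km Kp,
        ((Finset.univ.filter (fun j => inBand (d i j) Km k (S'' i j))).card : ℤ) = θ k) := by
  have hK : Km ≤ Kp := (mem_Icc.1 hp).1.trans (mem_Icc.1 hp).2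
  have hθsum : ∑ k ∈ Icc Km Kp, θ k = n := by
    have := add_sum_erase _ θ hp
    omega
  have hθ_nonneg : ∀ k ∈ Icc Km Kp, 0 ≤ θ k := fun k hk =>
    profile_nonneg hp (fun k hk => ⟨(hbounds k hk).1, (hbounds k hk).2.1⟩) hpfeas hθlt hθgt
      hθsum hk
  choose b hb_mem hb_band using fun i j => exists_inBand hK (hrange i j).1 (hrange i j).2
  have hdom : ∀ i, ∀ k ∈ Icc Km Kp, ∑ x ∈ Icc Km k, θ x ≤ #{j | b i j ≤ k} := fun i k hk =>
    sum_Icc_profile_le_card_filter_le (hb_mem i) hθlt hθgt (by simpa using hθsum) (fun k hk => by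
      simpa only [filter_inBand_eq_filter_eq (hmono i) (hb_mem i) (hb_band i) hk] using
        hfeas i k hk) hk
  choose c hbc hc_mem hc_card using fun i =>
    exists_le_and_card_fiber_eq hθ_nonneg hθsum (b i) (hdom i)
  have hd_mono : ∀ i j {k k'}, k ∈ Icc Km Kp → k' ∈ Icc Km Kp → k ≤ k' → d i j k ≤ d i j k' :=
    fun i j _ _ hk hk' => (hmono i j).monotoneOn (mem_Icc.1 hk) (mem_Icc.1 hk')
  refine ⟨fun i j => d i j (c i j), fun i j => ?_, fun i j => ?_, fun i k hk => ?_⟩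
  · exact (hb_band i j).le.trans (hd_mono i j (hb_mem i j) (hc_mem i j) (hbc i j))
  · exact ⟨hd_mono i j (left_mem_Icc.2 hK) (hc_mem i j) (mem_Icc.1 (hc_mem i j)).1,
      hd_mono i j (hc_mem i j) (right_mem_Icc.2 hK) (mem_Icc.1 (hc_mem i j)).2⟩
  · rw [filter_inBand_eq_filter_eq (hmono i) (hc_mem i)
      (fun j => inBand_self (hmono i j) (hc_mem i j)) hk]
    exact hc_card i k hk

theorem stmt2 (m n : ℕ) (Km Kp : ℤ) (hKm : Km ≤ 0) (hKp : 0 ≤ Kp)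
    (d : Fin m → Fin n → ℤ → ℝ)
    (hmono : ∀ i j, StrictMonoOn (d i j) (Set.Icc (Km:ℤ) Kp))
    (hzero : ∀ i j, d i j 0 = 0)
    (l u : ℤ → ℤ)
    (hbounds : ∀ k ∈ Finset.Icc Km Kp, 0 ≤ l k ∧ l k ≤ u k ∧ u k ≤ (n:ℤ))
    (hu0 : u 0 = n)
    (hsuml : ∑ k ∈ Finset.Icc Km Kp, l k ≤ (n:ℤ))
    (p : ℤ) (hp : p ∈ Finset.Icc Km Kp)
    (hpfeas : (∑ i ∈ Finset.Icc Km p, l i) + (∑ i ∈ Finset.Icc (p+1) Kp, u i) ≤ (n:ℤ))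
    (hpmin : ∀ k ∈ Finset.Icc Km Kp,
      (∑ i ∈ Finset.Icc Km k, l i) + (∑ i ∈ Finset.Icc (k+1) Kp, u i) ≤ (n:ℤ) → p ≤ k)
    (θ : ℤ → ℤ)
    (hθlt : ∀ k, k < p → θ k = l k)
    (hθgt : ∀ k, p < k → θ k = u k)
    (hθp : θ p = n - ∑ k ∈ (Finset.Icc Km Kp).erase p, θ k)
    (S : Fin m → Fin n → ℝ)
    (hrange : ∀ i j, d i j Km ≤ S i j ∧ S i j ≤ d i j Kp)
    (hfeas : ∀ i : Fin m, ∀ k ∈ Finset.Icc Km Kp,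
      l k ≤ ((Finset.univ.filter (fun j => inBand (d i j) Km k (S i j))).card : ℤ) ∧
      ((Finset.univ.filter (fun j => inBand (d i j) Km k (S i j))).card : ℤ) ≤ u k) :
    ∃ S'' : Fin m → Fin n → ℝ,
      (∀ i j, S i j ≤ S'' i j) ∧
      (∀ i j, d i j Km ≤ S'' i j ∧ S'' i j ≤ d i j Kp) ∧
      (∀ i : Fin m, ∀ k ∈ Finset.Icc Km Kp,
        ((Finset.univ.filter (fun j => inBand (d i j) Km k (S'' i j))).card : ℤ) = θ k) :=
  stmt2_general m n Km Kp d hmono l u hbounds p hp hpfeas θ hθlt hθgt hθp S hrange hfeas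
end

section
/- For each row i, the maximum total deviation DEV_i(x, S_M) over all profile-and-bound-valid scenarios equals the optimal value of the binary program: maximize ∑_{j∈J} ∑_{k∈K} d^k_{ij} x_j y^k_{ij} subject to ∑_{j∈J} y^k_{ij} = θ_k for all k ∈ K, ∑_{k∈K} y^k_{ij} ≤ 1 for all j ∈ J, and y^k_{ij} ∈ {0,1}. -/
theorem stmt3 (n : ℕ) (K : Type) [Fintype K] [DecidableEq K]
    (θ : K → ℕ) (hθ : ∑ k, θ k = n)
    (d : Fin n → K → ℝ) (x : Fin n → ℝ) (hx : ∀ j, 0 ≤ x j) :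
    {v : ℝ | ∃ κ : Fin n → K,
        (∀ k, (Finset.univ.filter (fun j => κ j = k)).card = θ k) ∧
        v = ∑ j, d j (κ j) * x j}
    = {v : ℝ | ∃ y : Fin n → K → ℝ,
        (∀ j k, y j k = 0 ∨ y j k = 1) ∧
        (∀ k, ∑ j, y j k = (θ k : ℝ)) ∧
        (∀ j, ∑ k, y j k ≤ 1) ∧
        v = ∑ j, ∑ k, d j k * x j * y j k} := by
  ext v
  simp only [Set.mem_setOf_eq]
  constructor
  · rintro ⟨κ, hcard, rfl⟩
    refine ⟨fun j k => if κ j = k then 1 else 0, ?_, ?_, ?_, ?_⟩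
    · intro j k; by_cases h : κ j = k <;> simp [h]
    · intro k
      rw [← hcard k]
      simp [Finset.sum_boole]
    · intro j; simp
    · refine Finset.sum_congr rfl fun j _ => ?_
      rw [Finset.sum_eq_single (κ j)] <;> simp +contextual [eq_comm]
  · rintro ⟨y, h01, hrow, hcol, rfl⟩
    -- each column sum is exactly 1
    have hnn : ∀ j k, (0:ℝ) ≤ y j k := fun j k => by rcases h01 j k with h | h <;> simp [h]
    have htot : ∑ j : Fin n, ∑ k, y j k = (n : ℝ) := by
      rw [Finset.sum_comm]
      simp only [hrow]
      rw [← Nat.cast_sum, hθ]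
    have hone : ∀ j : Fin n, ∑ k, y j k = 1 := by
      have := Finset.sum_eq_sum_iff_of_le (s := (Finset.univ : Finset (Fin n)))
        (f := fun j => ∑ k, y j k) (g := fun _ => (1:ℝ)) (fun i _ => hcol i)
      simp only [Finset.sum_const, Finset.card_univ, Fintype.card_fin, nsmul_eq_mul, mul_one]
        at this
      intro j
      exact ((this.mp htot) j (Finset.mem_univ j))
    have hex : ∀ j : Fin n, ∃ k, y j k = 1 := by
      intro j
      by_contra h
      push_neg at h
      have : ∀ k, y j k = 0 := fun k => (h01 j k).resolve_right (h k)
      have h1 := hone j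
      rw [Finset.sum_eq_zero fun k _ => this k] at h1
      norm_num at h1
    choose κ hκ using hex
    have hzero : ∀ j k, κ j ≠ k → y j k = 0 := by
      intro j k hne
      have h1 := hone j
      rw [← Finset.add_sum_erase Finset.univ _ (Finset.mem_univ (κ j)), hκ j] at h1
      have h2 : ∑ k ∈ Finset.univ.erase (κ j), y j k = 0 := by linarith
      have := (Finset.sum_eq_zero_iff_of_nonneg (fun k _ => hnn j k)).mp h2
      exact this k (Finset.mem_erase.mpr ⟨fun h => hne h.symm, Finset.mem_univ k⟩)
    have hind : ∀ j k, y j k = if κ j = k then 1 else 0 := by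
      intro j k
      by_cases h : κ j = k
      · subst h; simp [hκ j]
      · simp [h, hzero j k h]
    refine ⟨κ, ?_, ?_⟩
    · intro k
      have := hrow k
      have : ((Finset.univ.filter (fun j => κ j = k)).card : ℝ) = (θ k : ℝ) := by
        rw [← this]
        simp only [hind]
        simp [Finset.sum_boole]
      exact_mod_cast this
    · refine Finset.sum_congr rfl fun j _ => ?_
      simp only [hind]
      rw [Finset.sum_eq_single (κ j)] <;> simp +contextual [eq_comm]
end

section
/- A point x ≥ 0 (with integrality on a subset of coordinates) is feasible for the robust counterpart constraint ∑_j ā_{ij} x_j + DEV_i(x, S_M) ≤ b_i if and only if there exist w ∈ ℝ^K and z ∈ ℝ^J_{≥0} such that ∑_j ā_{ij} x_j + ∑_{k∈K} θ_k w_k + ∑_{j∈J} z_{ij} ≤ b_i and w_k + z_{ij} ≥ d^k_{ij} x_j for all j ∈ J, k ∈ K. -/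
/-!
Weak LP duality gives `←`. For `→`, the left side says that every assignment `f` of the items
`j` to the classes `k` with class sizes `θ` has value `∑ j, c j (f j) ≤ b - ∑ j, abar j * x j`,
where `c j k = d j k * x j`. Take an optimal `f`. Since permuting the items preserves the class sizes, the gains
`c i (f j) - c i (f i)` of reassigning items have no positive cycle, so longest simple walks give
potentials `R` with `c i (f j) - c i (f i) + R j ≤ R i`. Then `z j = c j (f j) + R j` and
`w k = max_j (c j k - z j)` form a dual solution of value at most that of `f`; shifting `w` down
and `z` up by a common constant, which preserves the value because `∑ k, θ k = n`, makes `z ≥ 0`.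
-/

open Finset

section Potential

variable {α : Type*} (b : α → α → ℝ)

def walkWeight : List α → ℝ
  | u :: v :: l => b u v + walkWeight (v :: l)
  | _ => 0

@[simp] lemma walkWeight_singleton (u : α) : walkWeight b [u] = 0 := rfl

@[simp] lemma walkWeight_cons_cons (u v : α) (l : List α) :
    walkWeight b (u :: v :: l) = b u v + walkWeight b (v :: l) := rfl

lemma walkWeight_append_cons (A : List α) (v : α) (B : List α) :
    walkWeight b (A ++ v :: B) = walkWeight b (A ++ [v]) + walkWeight b (v :: B) := by
  induction A with
  | nil => simp
  | cons u A ih =>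
    cases A with
    | nil => simp
    | cons u' A => simp only [List.cons_append, walkWeight_cons_cons] at ih ⊢; rw [ih]; ring

lemma walkWeight_append_pair (A : List α) (u v : α) :
    walkWeight b (A ++ [u, v]) = walkWeight b (A ++ [u]) + b u v := by
  simp [walkWeight_append_cons b A u [v]]

lemma sum_apply_formPerm [Fintype α] [DecidableEq α] (hdiag : ∀ x, b x x = 0) {u : α}
    {l : List α} (hl : (u :: l).Nodup) :
    ∑ x, b x ((u :: l).formPerm x) = walkWeight b (u :: l ++ [u]) := by
  induction l using List.reverseRecOn with
  | nil => simp [hdiag]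
  | append_singleton l q ih =>
    rw [← List.cons_append] at hl ⊢
    set p := (u :: l).getLast (List.cons_ne_nil u l)
    have hsplit : (u :: l).dropLast ++ [p] = u :: l := List.dropLast_append_getLast _
    have hq : q ∉ u :: l := fun h => (List.nodup_append.1 hl).2.2 q h q (by simp) rfl
    have hpq : p ≠ q := fun h => hq (h ▸ List.getLast_mem _)
    have hperm : (u :: l ++ [q]).formPerm = (u :: l).formPerm * Equiv.swap p q := by
      rw [← hsplit, List.append_assoc, List.singleton_append, List.formPerm_append_pair]
    have hdiff : ∑ x, (b x ((u :: l ++ [q]).formPerm x) - b x ((u :: l).formPerm x))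
        = (b p q - b p u) + b q u := by
      simp only [hperm, Equiv.Perm.mul_apply]
      rw [Fintype.sum_eq_add p q hpq]
      · simp [List.formPerm_apply_of_notMem hq, hdiag, p]
      · intro x hx
        simp [Equiv.swap_apply_of_ne_of_ne hx.1 hx.2]
    have hwalk : walkWeight b (u :: l ++ [q] ++ [u])
        = walkWeight b (u :: l ++ [u]) + (b p q - b p u) + b q u := by
      rw [← hsplit]
      simp only [List.append_assoc, List.cons_append, List.nil_append]
      rw [walkWeight_append_cons b _ p [q, u], walkWeight_append_pair]
      simp; ring
    rw [sum_sub_distrib, ih (List.nodup_append.1 hl).1] at hdiff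
    linarith

instance finite_nodup_cons [Fintype α] [DecidableEq α] (x : α) :
    Finite {l : List α // (x :: l).Nodup} :=
  Finite.of_injective (fun l => (⟨l.1, l.2.of_cons⟩ : {l : List α // l.Nodup}))
    fun _ _ h => Subtype.ext (congrArg (fun l : {l : List α // l.Nodup} => l.1) h)

noncomputable def maxWalkWeight (x : α) : ℝ :=
  ⨆ l : {l : List α // (x :: l).Nodup}, walkWeight b (x :: l)

variable [Fintype α] [DecidableEq α]

lemma walkWeight_le_maxWalkWeight {x : α} {l : List α} (hl : (x :: l).Nodup) :
    walkWeight b (x :: l) ≤ maxWalkWeight b x :=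
  le_ciSup (f := fun l : {l : List α // (x :: l).Nodup} => walkWeight b (x :: l.1))
    (Finite.bddAbove_range _) ⟨l, hl⟩

lemma exists_walkWeight_eq_maxWalkWeight (x : α) :
    ∃ l, (x :: l).Nodup ∧ walkWeight b (x :: l) = maxWalkWeight b x := by
  have : Nonempty {l : List α // (x :: l).Nodup} := ⟨⟨[], List.nodup_singleton x⟩⟩
  obtain ⟨⟨l, hl⟩, h⟩ := exists_eq_ciSup_of_finite
    (f := fun l : {l : List α // (x :: l).Nodup} => walkWeight b (x :: l.1))
  exact ⟨l, hl, h⟩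

theorem maxWalkWeight_add_le (hdiag : ∀ x, b x x = 0)
    (hperm : ∀ σ : Equiv.Perm α, ∑ x, b x (σ x) ≤ 0) (x y : α) :
    b x y + maxWalkWeight b y ≤ maxWalkWeight b x := by
  have hcycle : ∀ u l, (u :: l).Nodup → walkWeight b (u :: l ++ [u]) ≤ 0 :=
    fun u l hl => sum_apply_formPerm b hdiag hl ▸ hperm _
  obtain ⟨l, hl, hmax⟩ := exists_walkWeight_eq_maxWalkWeight b y
  rw [← hmax]
  by_cases hx : x ∈ y :: l
  -- the walk `x → y → ⋯` would repeat `x`: cut off the cycle through `x`, which has weight `≤ 0`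
  · obtain ⟨A, B, hAB⟩ := List.append_of_mem hx
    cases A with
    | nil =>
      obtain ⟨rfl, rfl⟩ := List.cons_eq_cons.1 hAB
      simpa [hdiag] using walkWeight_le_maxWalkWeight b hl
    | cons a A =>
      obtain ⟨rfl, rfl⟩ := List.cons_eq_cons.1 hAB
      have hcyc : (x :: y :: A).Nodup :=
        (List.perm_append_singleton x (y :: A)).nodup_iff.1
          (hl.sublist (((List.sublist_append_left [x] B).append_left A).cons_cons y))
      have hB : (x :: B).Nodup := hl.sublist ((List.sublist_append_right A _).cons y)
      calc b x y + walkWeight b (y :: (A ++ x :: B))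
          = walkWeight b (x :: y :: A ++ [x]) + walkWeight b (x :: B) := by
            rw [← List.cons_append, walkWeight_append_cons]; simp; ring
        _ ≤ maxWalkWeight b x := by
            linarith [hcycle _ _ hcyc, walkWeight_le_maxWalkWeight b hB]
  · simpa using walkWeight_le_maxWalkWeight b (List.nodup_cons.2 ⟨hx, hl⟩)

end Potential

section Assignment

variable {ι K : Type*} [Fintype ι]

theorem exists_dual_of_forall_perm [DecidableEq ι] (c : ι → K → ℝ) (f : ι → K)
    (hf : ∀ σ : Equiv.Perm ι, ∑ j, c j (f (σ j)) ≤ ∑ j, c j (f j)) :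
    ∃ (w : K → ℝ) (z : ι → ℝ), (∀ j k, c j k ≤ w k + z j) ∧
      ∑ j, w (f j) + ∑ j, z j ≤ ∑ j, c j (f j) := by
  -- `b i j` is the gain of moving item `i` into the class of item `j`
  set b : ι → ι → ℝ := fun i j => c i (f j) - c i (f i)
  have hR := maxWalkWeight_add_le b (fun _ => sub_self _)
    (fun σ => by simpa [b, sum_sub_distrib] using hf σ)
  set z : ι → ℝ := fun j => c j (f j) + maxWalkWeight b j
  set w : K → ℝ := fun k => ⨆ j, (c j k - z j)
  have hw : ∀ i, w (f i) ≤ -maxWalkWeight b i := fun i =>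
    have : Nonempty ι := ⟨i⟩
    ciSup_le fun j => by linarith [hR j i]
  refine ⟨w, z, fun j k => ?_, ?_⟩
  · linarith [le_ciSup (Finite.bddAbove_range fun j => c j k - z j) j]
  · calc ∑ j, w (f j) + ∑ j, z j ≤ ∑ j, -maxWalkWeight b j + ∑ j, z j := by
          gcongr with j; exact hw j
      _ = ∑ j, c j (f j) := by simp [z, sum_add_distrib]

lemma exists_dual_nonneg_of_sum_eq_card [Fintype K] (c : ι → K → ℝ) (θ : K → ℕ)
    (hθ : ∑ k, θ k = Fintype.card ι) (w : K → ℝ) (z : ι → ℝ) (hwz : ∀ j k, c j k ≤ w k + z j) :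
    ∃ (w' : K → ℝ) (z' : ι → ℝ), (∀ j, 0 ≤ z' j) ∧ (∀ j k, c j k ≤ w' k + z' j) ∧
      ∑ k, (θ k : ℝ) * w' k + ∑ j, z' j = ∑ k, (θ k : ℝ) * w k + ∑ j, z j := by
  set t := ∑ j, |z j|
  refine ⟨fun k => w k - t, fun j => z j + t, fun j => ?_, fun j k => by linarith [hwz j k], ?_⟩
  · linarith [neg_abs_le (z j), single_le_sum (fun i _ => abs_nonneg (z i)) (mem_univ j)]
  · have hθ' : ∑ k, (θ k : ℝ) = Fintype.card ι := by exact_mod_cast hθ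
    simp only [mul_sub, sum_sub_distrib, sum_add_distrib, ← sum_mul, hθ', sum_const, card_univ,
      nsmul_eq_mul]
    ring

variable [DecidableEq K]

lemma card_fiber_comp_perm (f : ι → K) (σ : Equiv.Perm ι) (k : K) :
    #{j | f (σ j) = k} = #{j | f j = k} :=
  card_equiv σ (by simp)

variable [Fintype K]

lemma exists_card_fiber_eq (θ : K → ℕ) (hθ : ∑ k, θ k = Fintype.card ι) :
    ∃ f : ι → K, ∀ k, #{j | f j = k} = θ k := by
  let e : ι ≃ Σ k, Fin (θ k) := Fintype.equivOfCardEq (by simp [hθ])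
  refine ⟨fun j => (e j).1, fun k => ?_⟩
  rw [← Fintype.card_subtype, ← Fintype.card_fin (θ k)]
  exact Fintype.card_congr ((e.subtypeEquiv fun _ => Iff.rfl).trans (Equiv.sigmaSubtype k))

lemma sum_card_fiber_mul (f : ι → K) (w : K → ℝ) :
    ∑ k, (#{j | f j = k} : ℝ) * w k = ∑ j, w (f j) := by
  rw [← sum_fiberwise univ f]
  refine sum_congr rfl fun k _ => ?_
  rw [sum_congr rfl fun j hj => by rw [(mem_filter.1 hj).2], sum_const, nsmul_eq_mul]

theorem exists_assignment_and_dual [DecidableEq ι] (c : ι → K → ℝ) (θ : K → ℕ)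
    (hθ : ∑ k, θ k = Fintype.card ι) :
    ∃ f : ι → K, (∀ k, #{j | f j = k} = θ k) ∧ ∃ (w : K → ℝ) (z : ι → ℝ), (∀ j, 0 ≤ z j) ∧
      (∀ j k, c j k ≤ w k + z j) ∧ ∑ k, (θ k : ℝ) * w k + ∑ j, z j ≤ ∑ j, c j (f j) := by
  obtain ⟨f₀, hf₀⟩ := exists_card_fiber_eq θ hθ
  obtain ⟨f, hf, hmax⟩ := exists_max_image {f : ι → K | ∀ k, #{j | f j = k} = θ k}
    (fun f => ∑ j, c j (f j)) ⟨f₀, by simpa using hf₀⟩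
  simp only [mem_filter, mem_univ, true_and] at hf hmax
  obtain ⟨w, z, hwz, hval⟩ := exists_dual_of_forall_perm c f fun σ =>
    hmax _ fun k => (card_fiber_comp_perm f σ k).trans (hf k)
  obtain ⟨w', z', hz', hwz', heq⟩ := exists_dual_nonneg_of_sum_eq_card c θ hθ w z hwz
  refine ⟨f, hf, w', z', hz', hwz', ?_⟩
  simp_rw [heq, ← hf, sum_card_fiber_mul]
  exact hval

end Assignment

theorem sum_mul_le_of_dual {ι K : Type*} [Fintype ι] [Fintype K] (c y : ι → K → ℝ) (θ : K → ℝ)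
    (hy : ∀ j k, 0 ≤ y j k) (hcol : ∀ k, ∑ j, y j k = θ k) (hrow : ∀ j, ∑ k, y j k ≤ 1)
    (w : K → ℝ) (z : ι → ℝ) (hz : ∀ j, 0 ≤ z j) (hwz : ∀ j k, c j k ≤ w k + z j) :
    ∑ j, ∑ k, c j k * y j k ≤ ∑ k, θ k * w k + ∑ j, z j :=
  calc ∑ j, ∑ k, c j k * y j k ≤ ∑ j, ∑ k, (w k + z j) * y j k := by
        gcongr with j _ k _
        exacts [hy j k, hwz j k]
    _ = ∑ k, θ k * w k + ∑ j, z j * ∑ k, y j k := by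
        simp only [add_mul, sum_add_distrib, mul_sum, ← hcol, sum_mul]
        rw [sum_comm]; simp only [mul_comm]
    _ ≤ ∑ k, θ k * w k + ∑ j, z j := by
        gcongr with j
        exact mul_le_of_le_one_right (hz j) (hrow j)

theorem stmt7_general (n : ℕ) (K : Type) [Fintype K]
    (θ : K → ℕ) (hθ : ∑ k, θ k = n)
    (abar : Fin n → ℝ) (b : ℝ)
    (d : Fin n → K → ℝ) (x : Fin n → ℝ) :
    (∀ y : Fin n → K → ℝ, (∀ j k, y j k = 0 ∨ y j k = 1) →
        (∀ k, ∑ j, y j k = (θ k : ℝ)) → (∀ j, ∑ k, y j k ≤ 1) →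
        ∑ j, abar j * x j + ∑ j, ∑ k, d j k * x j * y j k ≤ b) ↔
    (∃ (w : K → ℝ) (z : Fin n → ℝ), (∀ j, 0 ≤ z j) ∧
      (∀ j k, d j k * x j ≤ w k + z j) ∧
      ∑ j, abar j * x j + ∑ k, (θ k : ℝ) * w k + ∑ j, z j ≤ b) := by
  classical
  constructor
  · intro H
    obtain ⟨f, hf, w, z, hz, hwz, hval⟩ :=
      exists_assignment_and_dual (fun j k => d j k * x j) θ (by simpa using hθ)
    refine ⟨w, z, hz, hwz, ?_⟩
    have hf_le := H (fun j k => if f j = k then 1 else 0) (fun j k => by split_ifs <;> simp)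
      (fun k => by simp [sum_boole, hf]) (fun j => by simp)
    simp only [mul_ite, mul_one, mul_zero, sum_ite_eq, mem_univ, if_true] at hf_le
    linarith
  · rintro ⟨w, z, hz, hwz, hb⟩ y hy hcol hrow
    have := sum_mul_le_of_dual (fun j k => d j k * x j) y (fun k => (θ k : ℝ))
      (fun j k => (hy j k).elim (·.ge) (fun h => h ▸ zero_le_one)) hcol hrow w z hz hwz
    linarith

theorem stmt7 (n : ℕ) (K : Type) [Fintype K]
    (θ : K → ℕ) (hθ : ∑ k, θ k = n)
    (abar : Fin n → ℝ) (b : ℝ)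
    (d : Fin n → K → ℝ) (x : Fin n → ℝ) (hx : ∀ j, 0 ≤ x j)
    (JZ : Finset (Fin n)) (hint : ∀ j ∈ JZ, ∃ z : ℤ, x j = z) :
    (∀ y : Fin n → K → ℝ, (∀ j k, y j k = 0 ∨ y j k = 1) →
        (∀ k, ∑ j, y j k = (θ k : ℝ)) → (∀ j, ∑ k, y j k ≤ 1) →
        ∑ j, abar j * x j + ∑ j, ∑ k, d j k * x j * y j k ≤ b) ↔
    (∃ (w : K → ℝ) (z : Fin n → ℝ), (∀ j, 0 ≤ z j) ∧
      (∀ j k, d j k * x j ≤ w k + z j) ∧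
      ∑ j, abar j * x j + ∑ k, (θ k : ℝ) * w k + ∑ j, z j ≤ b) :=
  stmt7_general n K θ hθ abar b d x
end

section
/- Construct the directed graph G with vertices {s, t} ∪ {v_j : j ∈ J} ∪ {w_k : k ∈ K}, arcs (s, v_j) with capacity 1 and cost 0, arcs (v_j, w_k) with capacity 1 and cost −d^k_{ij} x_j, and arcs (w_k, t) with capacity θ_k and cost 0. Then there is a cost-preserving (up to sign) bijection between profile-and-bound-valid scenarios S for row i and integral s–t flows f of value n in G: f carries one unit on (v_j, w_k) iff S assigns j to band k, and the flow cost satisfies c(f) = −∑_{j∈J} d^S_{ij} x_j. -/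
theorem stmt8 (n : ℕ) (K : Type) [Fintype K] [DecidableEq K]
    (θ : K → ℕ) (hθ : ∑ k, θ k = n)
    (d : Fin n → K → ℝ) (x : Fin n → ℝ) (hx : ∀ j, 0 ≤ x j) :
    ∃ Φ : {κ : Fin n → K // ∀ k, (Finset.univ.filter (fun j => κ j = k)).card = θ k} →
          {f : (Fin n → ℤ) × (Fin n → K → ℤ) × (K → ℤ) //
            (∀ j, 0 ≤ f.1 j ∧ f.1 j ≤ 1) ∧
            (∀ j k, 0 ≤ f.2.1 j k ∧ f.2.1 j k ≤ 1) ∧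
            (∀ k, 0 ≤ f.2.2 k ∧ f.2.2 k ≤ (θ k : ℤ)) ∧
            (∀ j, f.1 j = ∑ k, f.2.1 j k) ∧
            (∀ k, ∑ j, f.2.1 j k = f.2.2 k) ∧
            (∑ j, f.1 j = (n : ℤ))},
      Function.Bijective Φ ∧
      ∀ κ, (∀ (j : Fin n) (k : K), ((Φ κ).1.2.1 j k = 1 ↔ κ.1 j = k)) ∧
        (∑ j, ∑ k, (-(d j k * x j)) * ((Φ κ).1.2.1 j k : ℝ)) = -∑ j, d j (κ.1 j) * x j := by
  classical
  have hsum_ind : ∀ (κ : Fin n → K) (k : K),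
      (∑ j, (if κ j = k then (1:ℤ) else 0)) = ((Finset.univ.filter (fun j => κ j = k)).card : ℤ) := by
    intro κ k
    simp [Finset.sum_ite_eq, Finset.sum_boole]
  refine ⟨fun κ => ⟨(fun _ => 1, fun j k => if κ.1 j = k then 1 else 0, fun k => (θ k : ℤ)),
    ?_, ?_, ?_, ?_, ?_, ?_⟩, ?_, ?_⟩
  · intro j; exact ⟨zero_le_one, le_refl 1⟩
  · intro j k; dsimp only; split <;> omega
  · intro k; exact ⟨Int.ofNat_nonneg _, le_refl _⟩
  · intro j; simp
  · intro k; rw [hsum_ind]; exact_mod_cast congrArg Nat.cast (κ.2 k)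
  · simp
  · constructor
    · -- injective
      intro κ κ' h
      apply Subtype.ext; funext j
      have := congrArg (fun g => g.1.2.1 j (κ.1 j)) h
      dsimp only at this
      by_contra hne
      rw [if_pos rfl, if_neg (fun hh : κ'.1 j = κ.1 j => hne hh.symm)] at this
      exact one_ne_zero this
    · -- surjective
      rintro ⟨f, h1, h2, h3, h4, h5, h6⟩
      -- each f.1 j = 1
      have hf1 : ∀ j, f.1 j = 1 := by
        have hz : ∑ j, (1 - f.1 j) = 0 := by
          rw [Finset.sum_sub_distrib, h6]; simp
        have := (Finset.sum_eq_zero_iff_of_nonneg (fun j _ => by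
          have := (h1 j).2; omega)).mp hz
        intro j; have := this j (Finset.mem_univ j); omega
      have hrow : ∀ j, ∑ k, f.2.1 j k = 1 := fun j => by rw [← h4 j, hf1 j]
      -- choose κ
      have hex : ∀ j, ∃ k, f.2.1 j k = 1 := by
        intro j
        by_contra hc
        push_neg at hc
        have : ∀ k, f.2.1 j k = 0 := by
          intro k; have := h2 j k; have := hc k; omega
        have : ∑ k, f.2.1 j k = 0 := Finset.sum_eq_zero (fun k _ => this k)
        rw [hrow j] at this; exact one_ne_zero this
      set κ : Fin n → K := fun j => Classical.choose (hex j) with hκ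
      have hκ1 : ∀ j, f.2.1 j (κ j) = 1 := fun j => Classical.choose_spec (hex j)
      have hind : ∀ j k, f.2.1 j k = if κ j = k then 1 else 0 := by
        intro j k
        split
        · next h => rw [← h]; exact hκ1 j
        · next h =>
          by_contra hne
          have hk1 : f.2.1 j k = 1 := by have := h2 j k; omega
          have hsub : ({κ j, k} : Finset K) ⊆ Finset.univ := Finset.subset_univ _
          have h2le : (2:ℤ) ≤ ∑ k', f.2.1 j k' := by
            have := Finset.sum_le_sum_of_subset_of_nonneg hsub
              (fun k' _ _ => (h2 j k').1)
            rw [Finset.sum_pair h] at this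
            rw [hκ1 j, hk1] at this
            linarith
          rw [hrow j] at h2le; norm_num at h2le
      -- f.2.2 k = θ k
      have hcol : ∀ k, f.2.2 k = (θ k : ℤ) := by
        have hz : ∑ k, ((θ k : ℤ) - f.2.2 k) = 0 := by
          rw [Finset.sum_sub_distrib]
          have : ∑ k, f.2.2 k = (n : ℤ) := by
            calc ∑ k, f.2.2 k = ∑ k, ∑ j, f.2.1 j k :=
                  Finset.sum_congr rfl (fun k _ => (h5 k).symm)
              _ = ∑ j, ∑ k, f.2.1 j k := Finset.sum_comm
              _ = ∑ j, f.1 j := Finset.sum_congr rfl (fun j _ => (h4 j).symm)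
              _ = n := h6
          rw [this, ← hθ]; push_cast; ring
        have := (Finset.sum_eq_zero_iff_of_nonneg (fun k _ => by
          have := (h3 k).2; omega)).mp hz
        intro k; have := this k (Finset.mem_univ k); omega
      have hκcard : ∀ k, (Finset.univ.filter (fun j => κ j = k)).card = θ k := by
        intro k
        have : ((Finset.univ.filter (fun j => κ j = k)).card : ℤ) = (θ k : ℤ) := by
          calc ((Finset.univ.filter (fun j => κ j = k)).card : ℤ)
              = ∑ j, (if κ j = k then (1:ℤ) else 0) := (hsum_ind κ k).symm
            _ = ∑ j, f.2.1 j k := Finset.sum_congr rfl (fun j _ => (hind j k).symm)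
            _ = f.2.2 k := h5 k
            _ = (θ k : ℤ) := hcol k
        exact_mod_cast this
      refine ⟨⟨κ, hκcard⟩, ?_⟩
      apply Subtype.ext
      refine Prod.ext ?_ (Prod.ext ?_ ?_)
      · funext j; exact (hf1 j).symm
      · funext j k; exact (hind j k).symm
      · funext k; exact (hcol k).symm
  · intro κ
    constructor
    · intro j k
      dsimp only
      constructor
      · intro h; by_contra hne; rw [if_neg hne] at h; exact zero_ne_one h
      · intro h; rw [if_pos h]
    · rw [← Finset.sum_neg_distrib]
      refine Finset.sum_congr rfl (fun j _ => ?_)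
      simp [apply_ite, Finset.sum_ite_eq, mul_ite]
end

section
/- Let (x*, w*, z*) be an optimal solution of the robust binary program min{∑_j c_j x_j + ∑_k θ_k w_k + ∑_j z_j : w_k + z_j ≥ d^k_j x_j ∀j,k, w ≥ 0, z ≥ 0, x ∈ X} with optimal value Z*. Then Z* = ∑_k θ_k w*_k + min_{x ∈ X} ∑_j (c_j + d̄_j) x_j, where d̄_j = max{0, max_k (d^k_j − w*_k)}. -/
theorem stmt12 (n : ℕ) (K : Type) [Fintype K] [Nonempty K]
    (X : Set (Fin n → ℝ)) (hXne : X.Nonempty)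
    (hXbin : ∀ x ∈ X, ∀ j, x j = 0 ∨ x j = 1)
    (c : Fin n → ℝ) (hc : ∀ j, 0 ≤ c j)
    (θ : K → ℕ) (dd : Fin n → K → ℝ)
    (xs : Fin n → ℝ) (ws : K → ℝ) (zs : Fin n → ℝ)
    (hxs : xs ∈ X) (hws : ∀ k, 0 ≤ ws k) (hzs : ∀ j, 0 ≤ zs j)
    (hfeas : ∀ j k, dd j k * xs j ≤ ws k + zs j)
    (hopt : ∀ x ∈ X, ∀ (w : K → ℝ) (z : Fin n → ℝ), (∀ k, 0 ≤ w k) → (∀ j, 0 ≤ z j) →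
      (∀ j k, dd j k * x j ≤ w k + z j) →
      ∑ j, c j * xs j + ∑ k, (θ k : ℝ) * ws k + ∑ j, zs j ≤
      ∑ j, c j * x j + ∑ k, (θ k : ℝ) * w k + ∑ j, z j)
    (Zstar : ℝ)
    (hZ : Zstar = ∑ j, c j * xs j + ∑ k, (θ k : ℝ) * ws k + ∑ j, zs j) :
    IsLeast {v : ℝ | ∃ x ∈ X, v = ∑ j,
        (c j + max 0 (Finset.univ.sup' Finset.univ_nonempty (fun k => dd j k - ws k))) * x j}
      (Zstar - ∑ k, (θ k : ℝ) * ws k) := by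
  set db : Fin n → ℝ :=
    fun j => max 0 (Finset.univ.sup' Finset.univ_nonempty (fun k => dd j k - ws k)) with hdbdef
  have hdb0 : ∀ j, 0 ≤ db j := fun j => le_max_left _ _
  have hdbk : ∀ j k, dd j k - ws k ≤ db j := fun j k =>
    le_trans (Finset.le_sup' (fun k => dd j k - ws k) (Finset.mem_univ k)) (le_max_right _ _)
  have hx0 : ∀ x ∈ X, ∀ j, 0 ≤ x j := by
    intro x hx j; rcases hXbin x hx j with h | h <;> rw [h] <;> norm_num
  have hz0 : ∀ x ∈ X, ∀ j, 0 ≤ db j * x j :=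
    fun x hx j => mul_nonneg (hdb0 j) (hx0 x hx j)
  have hfeas' : ∀ x ∈ X, ∀ j k, dd j k * x j ≤ ws k + db j * x j := by
    intro x hx j k
    rcases hXbin x hx j with h | h <;> rw [h] <;> simp
    · exact hws k
    · linarith [hdbk j k]
  have hzle : ∀ j, db j * xs j ≤ zs j := by
    intro j
    rcases hXbin xs hxs j with h | h <;> rw [h] <;> simp
    · exact hzs j
    · refine max_le (hzs j) (Finset.sup'_le _ _ fun k _ => ?_)
      have h2 := hfeas j k; rw [h] at h2; linarith
  have hsum : ∑ j, zs j = ∑ j, db j * xs j := by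
    have h1 := hopt xs hxs ws (fun j => db j * xs j) hws (hz0 xs hxs) (hfeas' xs hxs)
    have h2 : ∑ j, db j * xs j ≤ ∑ j, zs j := Finset.sum_le_sum fun j _ => hzle j
    linarith
  have hexp : ∀ x : Fin n → ℝ,
      ∑ j, (c j + db j) * x j = ∑ j, c j * x j + ∑ j, db j * x j := by
    intro x
    rw [← Finset.sum_add_distrib]
    exact Finset.sum_congr rfl fun j _ => by ring
  constructor
  · exact ⟨xs, hxs, by rw [hZ, hexp, hsum]; ring⟩
  · rintro v ⟨x, hx, rfl⟩
    have h1 := hopt x hx ws (fun j => db j * x j) hws (hz0 x hx) (hfeas' x hx)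
    rw [hZ, hexp]
    linarith
end
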